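/- arXiv:1505.02124 — 2 statements merged into one kernel-verified Lean document; each statement's English description precedes it below -/
import Mathlib

section
/- Let A and B be positive definite Hermitian n×n matrices. Then tr_C(B) ≤ tr_C(A) · tr_A(B) for any positive definite Hermitian matrix C, where tr_P(Q) denotes the trace of Q with respect to P, i.e. the trace of P⁻¹Q. -/
/-!
Writing `t = re tr(A⁻¹B)`, the matrix `A^{-1/2} B A^{-1/2}` is positive semidefinite with trace `t`,
so it is at most `t • 1`; conjugating by `A^{1/2}` gives `B ≤ t • A` in the Loewner order.
Since `X ↦ tr(C⁻¹X)` is monotone for positive `C⁻¹`, `tr(C⁻¹B) ≤ t · tr(C⁻¹A)`.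
-/

open scoped ComplexOrder MatrixOrder
open Matrix

namespace Matrix

variable {n 𝕜 : Type*} [Fintype n] [DecidableEq n] [RCLike 𝕜]

lemma PosSemidef.le_re_trace_smul_one {X : Matrix n n 𝕜} (hX : X.PosSemidef) :
    X ≤ RCLike.re X.trace • (1 : Matrix n n 𝕜) := by
  rw [← Algebra.algebraMap_eq_smul_one]
  refine le_algebraMap_of_spectrum_le (fun r hr => ?_) hX.isHermitian.isSelfAdjoint
  obtain ⟨i, rfl⟩ := hX.isHermitian.spectrum_real_eq_range_eigenvalues ▸ hr
  rw [hX.isHermitian.trace_eq_sum_eigenvalues, map_sum]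
  simp only [RCLike.ofReal_re]
  exact Finset.single_le_sum (fun j _ => hX.eigenvalues_nonneg j) (Finset.mem_univ i)

lemma PosSemidef.trace_mul_nonneg {P Y : Matrix n n 𝕜} (hP : P.PosSemidef) (hY : Y.PosSemidef) :
    0 ≤ (P * Y).trace := by
  obtain ⟨R, rfl⟩ := CStarAlgebra.nonneg_iff_eq_star_mul_self.mp hP.nonneg
  rw [mul_assoc, trace_mul_comm, mul_assoc, ← mul_assoc, star_eq_conjTranspose]
  exact (hY.mul_mul_conjTranspose_same R).trace_nonneg

lemma PosSemidef.trace_mul_le_trace_mul {P X Y : Matrix n n 𝕜} (hP : P.PosSemidef)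
    (hXY : X ≤ Y) : (P * X).trace ≤ (P * Y).trace := by
  rw [← sub_nonneg, ← trace_sub, ← mul_sub]
  exact hP.trace_mul_nonneg (sub_nonneg.mpr hXY).posSemidef

lemma PosDef.le_re_trace_inv_mul_smul {A B : Matrix n n 𝕜} (hA : A.PosDef) (hB : B.PosSemidef) :
    B ≤ RCLike.re (A⁻¹ * B).trace • A := by
  set S := CFC.sqrt A
  have hS : 0 ≤ S := CFC.sqrt_nonneg A
  have hSS : S * S = A := CFC.sqrt_mul_sqrt_self A
  have hdet : IsUnit S.det :=
    (isUnit_iff_isUnit_det S).mp ((CFC.isUnit_sqrt_iff A).mpr hA.isUnit)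
  have hX : 0 ≤ S⁻¹ * B * S⁻¹ := conjugate_nonneg_of_nonneg hB.nonneg hS.posSemidef.inv.nonneg
  have htrace : (S⁻¹ * B * S⁻¹).trace = (A⁻¹ * B).trace := by
    rw [trace_mul_cycle, ← hSS, Matrix.mul_inv_rev]
  have hconj : S * (S⁻¹ * B * S⁻¹) * S = B := by
    rw [mul_assoc, mul_assoc, nonsing_inv_mul S hdet, mul_one, ← mul_assoc,
      mul_nonsing_inv S hdet, one_mul]
  have h := conjugate_le_conjugate_of_nonneg hX.posSemidef.le_re_trace_smul_one hS
  rwa [hconj, htrace, mul_smul_comm, mul_one, smul_mul_assoc, hSS] at h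

end Matrix

theorem stmt_1 (n : ℕ) (A B C : Matrix (Fin n) (Fin n) ℂ)
    (hA : A.PosDef) (hB : B.PosDef) (hC : C.PosDef) :
    (Matrix.trace (C⁻¹ * B)).re ≤
      (Matrix.trace (C⁻¹ * A)).re * (Matrix.trace (A⁻¹ * B)).re := by
  have hBA := hA.le_re_trace_inv_mul_smul hB.posSemidef
  have h := (Complex.le_def.mp (hC.inv.posSemidef.trace_mul_le_trace_mul hBA)).1
  rwa [mul_smul_comm, trace_smul, Complex.smul_re, smul_eq_mul, mul_comm] at h
end

section
/- Let A be a positive definite Hermitian n×n matrix and B a positive semidefinite Hermitian n×n matrix. Then det(A) · trace(A⁻¹B) ≥ n · det(A)^((n-1)/n) · det(B)^(1/n); in particular, if det(B) > 0 then trace(A⁻¹B) > 0. -/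
/-!
With `S = √(A⁻¹)`, the matrix `C = S B S` is positive semidefinite, `tr (A⁻¹ B) = tr C` and
`det C = det B / det A`. AM-GM on the (nonnegative) eigenvalues of `C` gives
`n (det B / det A)^(1/n) ≤ tr (A⁻¹ B)`; multiplying by `det A > 0` yields the inequality, and its
right-hand side is positive as soon as `det B > 0`.
-/

open scoped ComplexOrder

theorem Real.card_mul_prod_rpow_inv_card_le_sum {ι : Type*} [Fintype ι] {z : ι → ℝ}
    (hz : ∀ i, 0 ≤ z i) :
    Fintype.card ι * (∏ i, z i) ^ (1 / (Fintype.card ι : ℝ)) ≤ ∑ i, z i := by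
  rcases isEmpty_or_nonempty ι with _ | _
  · simp
  have hcard : (0 : ℝ) < Fintype.card ι := by exact_mod_cast Fintype.card_pos
  have amgm := Real.geom_mean_le_arith_mean Finset.univ (fun _ ↦ 1) z (fun _ _ ↦ zero_le_one)
    (by simpa using hcard) (fun i _ ↦ hz i)
  simp only [Real.rpow_one, one_mul, Finset.sum_const, Finset.card_univ, nsmul_eq_mul,
    mul_one] at amgm
  rwa [one_div, ← le_div_iff₀' hcard]

theorem Real.mul_div_rpow_one_div_eq {a b x : ℝ} (ha : 0 < a) (hb : 0 ≤ b) (hx : x ≠ 0) :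
    a * (b / a) ^ (1 / x) = a ^ ((x - 1) / x) * b ^ (1 / x) := by
  rw [Real.div_rpow hb ha.le, sub_div, div_self hx, Real.rpow_sub ha, Real.rpow_one]
  have : 0 < a ^ (1 / x) := Real.rpow_pos_of_pos ha _
  field_simp

namespace Matrix

variable {ι 𝕜 : Type*} [Fintype ι] [DecidableEq ι] [RCLike 𝕜]

theorem PosSemidef.card_mul_re_det_rpow_le_re_trace {C : Matrix ι ι 𝕜} (hC : C.PosSemidef) :
    Fintype.card ι * (RCLike.re C.det) ^ (1 / (Fintype.card ι : ℝ)) ≤ RCLike.re C.trace := by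
  rw [hC.isHermitian.det_eq_prod_eigenvalues, hC.isHermitian.trace_eq_sum_eigenvalues,
    ← RCLike.ofReal_prod, ← RCLike.ofReal_sum, RCLike.ofReal_re, RCLike.ofReal_re]
  exact Real.card_mul_prod_rpow_inv_card_le_sum hC.eigenvalues_nonneg

theorem PosDef.re_det_inv_mul {A : Matrix ι ι 𝕜} (hA : A.PosDef) (B : Matrix ι ι 𝕜) :
    RCLike.re (A⁻¹.det * B.det) = RCLike.re B.det / RCLike.re A.det := by
  obtain ⟨a, -, ha⟩ := RCLike.pos_iff_exists_ofReal.mp hA.det_pos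
  rw [det_nonsing_inv, Ring.inverse_eq_inv, ← ha, ← RCLike.ofReal_inv, RCLike.re_ofReal_mul,
    RCLike.ofReal_re, div_eq_inv_mul]

open scoped MatrixOrder in
theorem PosDef.card_mul_rpow_le_re_trace_inv_mul {A B : Matrix ι ι 𝕜} (hA : A.PosDef)
    (hB : B.PosSemidef) :
    Fintype.card ι * (RCLike.re B.det / RCLike.re A.det) ^ (1 / (Fintype.card ι : ℝ)) ≤
      RCLike.re (A⁻¹ * B).trace := by
  set S := CFC.sqrt A⁻¹
  have hS : S.IsHermitian := (nonneg_iff_posSemidef.mp (CFC.sqrt_nonneg A⁻¹)).isHermitian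
  have hSS : S * S = A⁻¹ := CFC.sqrt_mul_sqrt_self A⁻¹ hA.inv.posSemidef.nonneg
  have hC : (S * B * S).PosSemidef := by
    simpa only [hS.eq] using hB.conjTranspose_mul_mul_same S
  have htrace : (A⁻¹ * B).trace = (S * B * S).trace := by
    rw [← hSS, trace_mul_cycle S B S]
  have hdet : (S * B * S).det = A⁻¹.det * B.det := by
    rw [← hSS, det_mul, det_mul, det_mul]; ring
  rw [htrace, ← hA.re_det_inv_mul, ← hdet]
  exact hC.card_mul_re_det_rpow_le_re_trace

end Matrix

theorem stmt_2 (n : ℕ) (hn : 1 ≤ n) (A B : Matrix (Fin n) (Fin n) ℂ)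
    (hA : A.PosDef) (hB : B.PosSemidef) :
    A.det.re * (Matrix.trace (A⁻¹ * B)).re ≥
      n * A.det.re ^ (((n : ℝ) - 1) / n) * B.det.re ^ (1 / (n : ℝ)) ∧
    (0 < B.det.re → 0 < (Matrix.trace (A⁻¹ * B)).re) := by
  have hn' : (0 : ℝ) < n := by exact_mod_cast hn
  have ha : 0 < A.det.re := (RCLike.pos_iff.mp hA.det_pos).1
  have hb : 0 ≤ B.det.re := (RCLike.nonneg_iff.mp hB.det_nonneg).1
  have hamgm := hA.card_mul_rpow_le_re_trace_inv_mul hB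
  rw [Fintype.card_fin] at hamgm
  have hmain : n * A.det.re ^ (((n : ℝ) - 1) / n) * B.det.re ^ (1 / (n : ℝ)) ≤
      A.det.re * (A⁻¹ * B).trace.re := by
    calc n * A.det.re ^ (((n : ℝ) - 1) / n) * B.det.re ^ (1 / (n : ℝ))
        = A.det.re * (n * (B.det.re / A.det.re) ^ (1 / (n : ℝ))) := by
          rw [mul_left_comm, Real.mul_div_rpow_one_div_eq ha hb hn'.ne', mul_assoc]
      _ ≤ A.det.re * (A⁻¹ * B).trace.re := mul_le_mul_of_nonneg_left hamgm ha.le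
  refine ⟨hmain, fun hb' ↦ pos_of_mul_pos_right (lt_of_lt_of_le ?_ hmain) ha.le⟩
  positivity
end
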